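/- arXiv:1806.00230 — 7 statements merged into one kernel-verified Lean document; each statement's English description precedes it below -/
import Mathlib

section
/- If M, N : I² → I are symmetric means, then a mean K on I is (M,N)-invariant if and only if it is (M∧N, M∨N)-invariant, where (M∧N)(x,y) := min(M(x,y),N(x,y)) and (M∨N)(x,y) := max(M(x,y),N(x,y)). -/
def IsMean (I : Set ℝ) (M : ℝ → ℝ → ℝ) : Prop :=
  ∀ x ∈ I, ∀ y ∈ I, M x y ∈ I ∧ min x y ≤ M x y ∧ M x y ≤ max x y

def IsInvariantMean (I : Set ℝ) (M N K : ℝ → ℝ → ℝ) : Prop :=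
  ∀ x ∈ I, ∀ y ∈ I, K x y = K (M x y) (N x y)

/-- for symmetric means `M`, `N`, a mean `K` is `(M,N)`-invariant iff it
is `(M ∧ N, M ∨ N)`-invariant. -/
theorem stmt1 (I : Set ℝ) (M N K : ℝ → ℝ → ℝ)
    (hM : IsMean I M) (hN : IsMean I N)
    (hMsymm : ∀ x ∈ I, ∀ y ∈ I, M x y = M y x)
    (hNsymm : ∀ x ∈ I, ∀ y ∈ I, N x y = N y x)
    (hK : IsMean I K) :
    IsInvariantMean I M N K ↔
      IsInvariantMean I (fun x y => min (M x y) (N x y))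
        (fun x y => max (M x y) (N x y)) K := by
  constructor
  · intro hinv
    -- K is symmetric on I
    have hsym : ∀ x ∈ I, ∀ y ∈ I, K x y = K y x := by
      intro x hx y hy
      rw [hinv x hx y hy, hinv y hy x hx, hMsymm x hx y hy, hNsymm x hx y hy]
    intro x hx y hy
    have hMm := (hM x hx y hy).1
    have hNm := (hN x hx y hy).1
    simp only
    rcases le_total (M x y) (N x y) with h | h
    · rw [min_eq_left h, max_eq_right h]; exact hinv x hx y hy
    · rw [min_eq_right h, max_eq_left h, hsym (N x y) hNm (M x y) hMm]
      exact hinv x hx y hy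
  · intro hinv
    have hsym : ∀ x ∈ I, ∀ y ∈ I, K x y = K y x := by
      intro x hx y hy
      rw [hinv x hx y hy, hinv y hy x hx]
      simp only [hMsymm x hx y hy, hNsymm x hx y hy]
    intro x hx y hy
    have hMm := (hM x hx y hy).1
    have hNm := (hN x hx y hy).1
    have h0 := hinv x hx y hy
    simp only at h0
    rcases le_total (M x y) (N x y) with h | h
    · rwa [min_eq_left h, max_eq_right h] at h0
    · rw [min_eq_right h, max_eq_left h, hsym (N x y) hNm (M x y) hMm] at h0
      exact h0
end

section
/- Let M, N : I² → I be means and define Lo(x,y) := lim_{n→∞} min(xₙ,yₙ) and Up(x,y) := lim_{n→∞} max(xₙ,yₙ), where xₙ, yₙ are the orbit sequences of (M,N) starting from (x,y). Then Lo and Up are (M,N)-invariant means, i.e. Lo(M(x,y),N(x,y)) = Lo(x,y) and Up(M(x,y),N(x,y)) = Up(x,y) for all x,y ∈ I. -/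
def orbit (M N : ℝ → ℝ → ℝ) (x y : ℝ) : ℕ → ℝ × ℝ
  | 0 => (x, y)
  | n + 1 => (M (orbit M N x y n).1 (orbit M N x y n).2,
      N (orbit M N x y n).1 (orbit M N x y n).2)

/-- The lower invariant mean `Lo(x,y) = lim_{n→∞} min(xₙ,yₙ)` (the sequence is
monotone and bounded, so the limit coincides with the `liminf`). -/
noncomputable def Lo (M N : ℝ → ℝ → ℝ) (x y : ℝ) : ℝ :=
  Filter.liminf (fun n => min (orbit M N x y n).1 (orbit M N x y n).2) Filter.atTop

/-- The upper invariant mean `Up(x,y) = lim_{n→∞} max(xₙ,yₙ)`. -/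
noncomputable def Up (M N : ℝ → ℝ → ℝ) (x y : ℝ) : ℝ :=
  Filter.limsup (fun n => max (orbit M N x y n).1 (orbit M N x y n).2) Filter.atTop

section Aux

open Filter Topology

variable {I : Set ℝ} {M N : ℝ → ℝ → ℝ}

lemma orbit_shift (M N : ℝ → ℝ → ℝ) (x y : ℝ) (n : ℕ) :
    orbit M N (M x y) (N x y) n = orbit M N x y (n + 1) := by
  induction n with
  | zero => rfl
  | succ n ih => simp [orbit, ih]

lemma orbit_mem (hM : IsMean I M) (hN : IsMean I N) {x y : ℝ}
    (hx : x ∈ I) (hy : y ∈ I) (n : ℕ) :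
    (orbit M N x y n).1 ∈ I ∧ (orbit M N x y n).2 ∈ I := by
  induction n with
  | zero => exact ⟨hx, hy⟩
  | succ n ih => exact ⟨(hM _ ih.1 _ ih.2).1, (hN _ ih.1 _ ih.2).1⟩

lemma min_mono (hM : IsMean I M) (hN : IsMean I N) {x y : ℝ}
    (hx : x ∈ I) (hy : y ∈ I) :
    Monotone (fun n => min (orbit M N x y n).1 (orbit M N x y n).2) := by
  apply monotone_nat_of_le_succ
  intro n
  obtain ⟨h1, h2⟩ := orbit_mem hM hN hx hy n
  exact le_min (hM _ h1 _ h2).2.1 (hN _ h1 _ h2).2.1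

lemma max_anti (hM : IsMean I M) (hN : IsMean I N) {x y : ℝ}
    (hx : x ∈ I) (hy : y ∈ I) :
    Antitone (fun n => max (orbit M N x y n).1 (orbit M N x y n).2) := by
  apply antitone_nat_of_succ_le
  intro n
  obtain ⟨h1, h2⟩ := orbit_mem hM hN hx hy n
  exact max_le (hM _ h1 _ h2).2.2 (hN _ h1 _ h2).2.2

lemma tendsto_lo (hM : IsMean I M) (hN : IsMean I N) {x y : ℝ}
    (hx : x ∈ I) (hy : y ∈ I) :
    Filter.Tendsto (fun n => min (orbit M N x y n).1 (orbit M N x y n).2)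
      Filter.atTop (nhds (Lo M N x y)) := by
  have hb : BddAbove (Set.range fun n => min (orbit M N x y n).1 (orbit M N x y n).2) := by
    refine ⟨max x y, ?_⟩
    rintro _ ⟨n, rfl⟩
    exact le_trans min_le_max (max_anti hM hN hx hy (Nat.zero_le n))
  have hT := tendsto_atTop_ciSup (min_mono hM hN hx hy) hb
  have heq : Lo M N x y = ⨆ n, min (orbit M N x y n).1 (orbit M N x y n).2 := hT.liminf_eq
  rw [heq]; exact hT

lemma tendsto_up (hM : IsMean I M) (hN : IsMean I N) {x y : ℝ}
    (hx : x ∈ I) (hy : y ∈ I) :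
    Filter.Tendsto (fun n => max (orbit M N x y n).1 (orbit M N x y n).2)
      Filter.atTop (nhds (Up M N x y)) := by
  have hb : BddBelow (Set.range fun n => max (orbit M N x y n).1 (orbit M N x y n).2) := by
    refine ⟨min x y, ?_⟩
    rintro _ ⟨n, rfl⟩
    exact le_trans (min_mono hM hN hx hy (Nat.zero_le n)) min_le_max
  have hT := tendsto_atTop_ciInf (max_anti hM hN hx hy) hb
  have heq : Up M N x y = ⨅ n, max (orbit M N x y n).1 (orbit M N x y n).2 := hT.limsup_eq
  rw [heq]; exact hT

end Aux

/-- `Lo` and `Up` are `(M,N)`-invariant means (and they are indeed the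
limits of `min(xₙ,yₙ)` and `max(xₙ,yₙ)`). -/
theorem stmt4 (I : Set ℝ) (hI : I.OrdConnected) (M N : ℝ → ℝ → ℝ)
    (hM : IsMean I M) (hN : IsMean I N) :
    (∀ x ∈ I, ∀ y ∈ I,
      Filter.Tendsto (fun n => min (orbit M N x y n).1 (orbit M N x y n).2)
        Filter.atTop (nhds (Lo M N x y)) ∧
      Filter.Tendsto (fun n => max (orbit M N x y n).1 (orbit M N x y n).2)
        Filter.atTop (nhds (Up M N x y))) ∧
    IsMean I (Lo M N) ∧ IsMean I (Up M N) ∧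
    IsInvariantMean I M N (Lo M N) ∧ IsInvariantMean I M N (Up M N) := by
  have hLo1 : ∀ x ∈ I, ∀ y ∈ I, min x y ≤ Lo M N x y := by
    intro x hx y hy
    exact ge_of_tendsto' (tendsto_lo hM hN hx hy)
      (fun n => min_mono hM hN hx hy (Nat.zero_le n))
  have hLo2 : ∀ x ∈ I, ∀ y ∈ I, Lo M N x y ≤ max x y := by
    intro x hx y hy
    exact le_of_tendsto' (tendsto_lo hM hN hx hy)
      (fun n => le_trans min_le_max (max_anti hM hN hx hy (Nat.zero_le n)))
  have hUp1 : ∀ x ∈ I, ∀ y ∈ I, min x y ≤ Up M N x y := by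
    intro x hx y hy
    exact ge_of_tendsto' (tendsto_up hM hN hx hy)
      (fun n => le_trans (min_mono hM hN hx hy (Nat.zero_le n)) min_le_max)
  have hUp2 : ∀ x ∈ I, ∀ y ∈ I, Up M N x y ≤ max x y := by
    intro x hx y hy
    exact le_of_tendsto' (tendsto_up hM hN hx hy)
      (fun n => max_anti hM hN hx hy (Nat.zero_le n))
  have hminI : ∀ x ∈ I, ∀ y ∈ I, min x y ∈ I := by
    intro x hx y hy
    rcases min_choice x y with h | h <;> rw [h] <;> assumption
  have hmaxI : ∀ x ∈ I, ∀ y ∈ I, max x y ∈ I := by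
    intro x hx y hy
    rcases max_choice x y with h | h <;> rw [h] <;> assumption
  refine ⟨fun x hx y hy => ⟨tendsto_lo hM hN hx hy, tendsto_up hM hN hx hy⟩,
    fun x hx y hy => ⟨hI.out (hminI x hx y hy) (hmaxI x hx y hy)
      ⟨hLo1 x hx y hy, hLo2 x hx y hy⟩, hLo1 x hx y hy, hLo2 x hx y hy⟩,
    fun x hx y hy => ⟨hI.out (hminI x hx y hy) (hmaxI x hx y hy)
      ⟨hUp1 x hx y hy, hUp2 x hx y hy⟩, hUp1 x hx y hy, hUp2 x hx y hy⟩,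
    ?_, ?_⟩
  · intro x hx y hy
    have hT := tendsto_lo hM hN hx hy
    have hshift : Filter.Tendsto
        (fun n => min (orbit M N (M x y) (N x y) n).1 (orbit M N (M x y) (N x y) n).2)
        Filter.atTop (nhds (Lo M N x y)) := by
      have h := (Filter.tendsto_add_atTop_iff_nat 1).2 hT
      simpa only [orbit_shift] using h
    exact hshift.liminf_eq.symm
  · intro x hx y hy
    have hT := tendsto_up hM hN hx hy
    have hshift : Filter.Tendsto
        (fun n => max (orbit M N (M x y) (N x y) n).1 (orbit M N (M x y) (N x y) n).2)
        Filter.atTop (nhds (Up M N x y)) := by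
      have h := (Filter.tendsto_add_atTop_iff_nat 1).2 hT
      simpa only [orbit_shift] using h
    exact hshift.limsup_eq.symm
end

section
/- Let M, N : I² → I be means. Every (M,N)-invariant mean K satisfies Lo(x,y) ≤ K(x,y) ≤ Up(x,y) for all x,y ∈ I, where Lo(x,y) = lim_{n→∞} min(xₙ,yₙ) and Up(x,y) = lim_{n→∞} max(xₙ,yₙ). That is, Lo is the smallest and Up the largest (M,N)-invariant mean. -/
/-- every `(M,N)`-invariant mean `K` satisfies `Lo ≤ K ≤ Up`, i.e. `Lo`
is the smallest and `Up` the largest `(M,N)`-invariant mean. -/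
theorem stmt5 (I : Set ℝ) (hI : I.OrdConnected) (M N : ℝ → ℝ → ℝ)
    (hM : IsMean I M) (hN : IsMean I N)
    (K : ℝ → ℝ → ℝ) (hK : IsMean I K) (hKinv : IsInvariantMean I M N K) :
    ∀ x ∈ I, ∀ y ∈ I, Lo M N x y ≤ K x y ∧ K x y ≤ Up M N x y := by
  intro x hx y hy
  -- key induction
  have key : ∀ n : ℕ, (orbit M N x y n).1 ∈ I ∧ (orbit M N x y n).2 ∈ I ∧
      K x y = K (orbit M N x y n).1 (orbit M N x y n).2 ∧
      min x y ≤ min (orbit M N x y n).1 (orbit M N x y n).2 ∧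
      max (orbit M N x y n).1 (orbit M N x y n).2 ≤ max x y := by
    intro n
    induction n with
    | zero => exact ⟨hx, hy, rfl, le_refl _, le_refl _⟩
    | succ n ih =>
      obtain ⟨h1, h2, hKeq, hmin, hmax⟩ := ih
      obtain ⟨hM1, hM2, hM3⟩ := hM _ h1 _ h2
      obtain ⟨hN1, hN2, hN3⟩ := hN _ h1 _ h2
      refine ⟨hM1, hN1, ?_, ?_, ?_⟩
      · rw [hKeq, hKinv _ h1 _ h2]; rfl
      · simp only [orbit]
        exact hmin.trans (le_min hM2 hN2)
      · simp only [orbit]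
        exact (max_le hM3 hN3).trans hmax
  constructor
  · apply Filter.liminf_le_of_frequently_le
    · apply Filter.Frequently.of_forall
      intro n
      obtain ⟨h1, h2, hKeq, _, _⟩ := key n
      rw [hKeq]
      exact (hK _ h1 _ h2).2.1
    · refine ⟨min x y, Filter.eventually_map.2 (Filter.Eventually.of_forall fun n => ?_)⟩
      exact (key n).2.2.2.1
  · apply Filter.le_limsup_of_frequently_le
    · apply Filter.Frequently.of_forall
      intro n
      obtain ⟨h1, h2, hKeq, _, _⟩ := key n
      rw [hKeq]
      exact (hK _ h1 _ h2).2.2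
    · refine ⟨max x y, Filter.eventually_map.2 (Filter.Eventually.of_forall fun n => ?_)⟩
      exact (key n).2.2.2.2
end

section
/- For each function w : [0,1] → [0,1], define φ_w : ℓ∞([0,1]) → [0,1] by φ_w(a) := liminf aₙ + w(liminf a_{2n}) · (limsup aₙ − liminf aₙ). Then φ_w is a 2-limit-like function, and the map w ↦ φ_w is injective; in particular there exist 2^𝔠 distinct 2-limit-like functions on ℓ∞([0,1]). -/
def TwoLimitLike (I : Set ℝ) (φ : (ℕ → ℝ) → ℝ) : Prop :=
  ∀ a : ℕ → ℝ, (∀ n, a n ∈ I) → BddAbove (Set.range a) → BddBelow (Set.range a) →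
    φ (fun n => a (n + 2)) = φ a ∧
    Filter.liminf a Filter.atTop ≤ φ a ∧ φ a ≤ Filter.limsup a Filter.atTop

/-- `φ_w(a) = liminf aₙ + w(liminf a_{2n}) ⬝ (limsup aₙ − liminf aₙ)`. -/
noncomputable def phiw (w : ℝ → ℝ) (a : ℕ → ℝ) : ℝ :=
  Filter.liminf a Filter.atTop +
    w (Filter.liminf (fun n => a (2 * n)) Filter.atTop) *
      (Filter.limsup a Filter.atTop - Filter.liminf a Filter.atTop)

open Filter

lemma bddU (a : ℕ → ℝ) (h : ∀ n, a n ≤ 1) : IsBoundedUnder (· ≤ ·) atTop a :=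
  isBoundedUnder_of ⟨1, h⟩

lemma bddL (a : ℕ → ℝ) (h : ∀ n, 0 ≤ a n) : IsBoundedUnder (· ≥ ·) atTop a :=
  isBoundedUnder_of ⟨0, h⟩

lemma liminf_mem (a : ℕ → ℝ) (h : ∀ n, a n ∈ Set.Icc (0:ℝ) 1) :
    Filter.liminf a Filter.atTop ∈ Set.Icc (0:ℝ) 1 := by
  constructor
  · exact le_liminf_of_le ((bddU a fun n => (h n).2).isCoboundedUnder_ge)
      (Eventually.of_forall fun n => (h n).1)
  · exact le_trans (liminf_le_limsup (bddU a fun n => (h n).2) (bddL a fun n => (h n).1))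
      (limsup_le_of_le ((bddL a fun n => (h n).1).isCoboundedUnder_le)
        (Eventually.of_forall fun n => (h n).2))

lemma liminf_le_limsup' (a : ℕ → ℝ) (h : ∀ n, a n ∈ Set.Icc (0:ℝ) 1) :
    Filter.liminf a Filter.atTop ≤ Filter.limsup a Filter.atTop :=
  liminf_le_limsup (bddU a fun n => (h n).2) (bddL a fun n => (h n).1)

/-- The test sequence for `t`: even places are `t`, odd places alternate `0,1`. -/
noncomputable def testSeq (t : ℝ) : ℕ → ℝ :=
  fun n => if n % 2 = 0 then t else if n % 4 = 1 then 0 else 1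

lemma testSeq_mem (t : ℝ) (ht : t ∈ Set.Icc (0:ℝ) 1) (n : ℕ) :
    testSeq t n ∈ Set.Icc (0:ℝ) 1 := by
  unfold testSeq
  split_ifs <;> simp [ht.1, ht.2]

lemma testSeq_liminf (t : ℝ) (ht : t ∈ Set.Icc (0:ℝ) 1) :
    Filter.liminf (testSeq t) Filter.atTop = 0 := by
  apply le_antisymm
  · apply liminf_le_of_frequently_le _ (bddL _ fun n => (testSeq_mem t ht n).1)
    rw [Filter.frequently_atTop]
    intro N
    refine ⟨4 * N + 1, by omega, ?_⟩
    have h1 : (4*N+1) % 2 = 1 := by omega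
    have h2 : (4*N+1) % 4 = 1 := by omega
    simp [testSeq, h1, h2]
  · exact le_liminf_of_le ((bddU _ fun n => (testSeq_mem t ht n).2).isCoboundedUnder_ge)
      (Eventually.of_forall fun n => (testSeq_mem t ht n).1)

lemma testSeq_limsup (t : ℝ) (ht : t ∈ Set.Icc (0:ℝ) 1) :
    Filter.limsup (testSeq t) Filter.atTop = 1 := by
  apply le_antisymm
  · exact limsup_le_of_le ((bddL _ fun n => (testSeq_mem t ht n).1).isCoboundedUnder_le)
      (Eventually.of_forall fun n => (testSeq_mem t ht n).2)
  · apply le_limsup_of_frequently_le _ (bddU _ fun n => (testSeq_mem t ht n).2)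
    rw [Filter.frequently_atTop]
    intro N
    refine ⟨4 * N + 3, by omega, ?_⟩
    have h1 : (4*N+3) % 2 = 1 := by omega
    have h2 : (4*N+3) % 4 = 3 := by omega
    simp [testSeq, h1, h2]

lemma testSeq_even (t : ℝ) :
    Filter.liminf (fun n => testSeq t (2 * n)) Filter.atTop = t := by
  have : (fun n => testSeq t (2 * n)) = fun _ => t := by
    funext n; simp [testSeq, Nat.mul_mod_right]
  rw [this, liminf_const]

lemma phiw_test (w : ℝ → ℝ) (t : ℝ) (ht : t ∈ Set.Icc (0:ℝ) 1) :
    phiw w (testSeq t) = w t := by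
  rw [phiw, testSeq_liminf t ht, testSeq_limsup t ht, testSeq_even t]
  ring

/-- each `w : [0,1] → [0,1]` yields a 2-limit-like function `φ_w` on
`ℓ∞([0,1])`, the assignment `w ↦ φ_w` is one-to-one, and consequently there are at
least `2^𝔠` distinct 2-limit-like functions on `ℓ∞([0,1])`. -/
theorem stmt9 :
    (∀ w : ℝ → ℝ, (∀ t ∈ Set.Icc (0:ℝ) 1, w t ∈ Set.Icc (0:ℝ) 1) →
      TwoLimitLike (Set.Icc 0 1) (phiw w)) ∧
    (∀ w w' : ℝ → ℝ, (∀ t ∈ Set.Icc (0:ℝ) 1, w t ∈ Set.Icc (0:ℝ) 1) →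
      (∀ t ∈ Set.Icc (0:ℝ) 1, w' t ∈ Set.Icc (0:ℝ) 1) →
      (∀ a : ℕ → ℝ, (∀ n, a n ∈ Set.Icc (0:ℝ) 1) → phiw w a = phiw w' a) →
      ∀ t ∈ Set.Icc (0:ℝ) 1, w t = w' t) ∧
    2 ^ Cardinal.continuum ≤
      Cardinal.mk {φ : (ℕ → ℝ) → ℝ // TwoLimitLike (Set.Icc 0 1) φ} := by
  have h2ll : ∀ w : ℝ → ℝ, (∀ t ∈ Set.Icc (0:ℝ) 1, w t ∈ Set.Icc (0:ℝ) 1) →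
      TwoLimitLike (Set.Icc 0 1) (phiw w) := by
    intro w hw a ha _ _
    have heven : (fun n => a (2 * n)) = fun n => a (2 * n) := rfl
    have hshift : phiw w (fun n => a (n + 2)) = phiw w a := by
      unfold phiw
      have h1 : Filter.liminf (fun n => a (n + 2)) Filter.atTop
          = Filter.liminf a Filter.atTop := liminf_nat_add a 2
      have h2 : Filter.limsup (fun n => a (n + 2)) Filter.atTop
          = Filter.limsup a Filter.atTop := limsup_nat_add a 2
      have h3 : (fun n => a (2 * n + 2)) = fun n => (fun m => a (2 * m)) (n + 1) := by
        funext n; ring_nf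
      have h4 : Filter.liminf (fun n => a (2 * n + 2)) Filter.atTop
          = Filter.liminf (fun n => a (2 * n)) Filter.atTop := by
        rw [h3]; exact liminf_nat_add (fun m => a (2 * m)) 1
      rw [h1, h2, h4]
    have hwmem : w (Filter.liminf (fun n => a (2 * n)) Filter.atTop) ∈ Set.Icc (0:ℝ) 1 :=
      hw _ (liminf_mem _ (fun n => ha (2 * n)))
    have hll : Filter.liminf a Filter.atTop ≤ Filter.limsup a Filter.atTop :=
      liminf_le_limsup' a ha
    refine ⟨hshift, ?_, ?_⟩
    · unfold phiw
      nlinarith [hwmem.1, hwmem.2]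
    · unfold phiw
      nlinarith [hwmem.1, hwmem.2]
  have hinj : ∀ w w' : ℝ → ℝ, (∀ t ∈ Set.Icc (0:ℝ) 1, w t ∈ Set.Icc (0:ℝ) 1) →
      (∀ t ∈ Set.Icc (0:ℝ) 1, w' t ∈ Set.Icc (0:ℝ) 1) →
      (∀ a : ℕ → ℝ, (∀ n, a n ∈ Set.Icc (0:ℝ) 1) → phiw w a = phiw w' a) →
      ∀ t ∈ Set.Icc (0:ℝ) 1, w t = w' t := by
    intro w w' _ _ heq t ht
    have := heq (testSeq t) (testSeq_mem t ht)
    rwa [phiw_test w t ht, phiw_test w' t ht] at this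
  refine ⟨h2ll, hinj, ?_⟩
  -- Cardinality: inject (Icc 0 1 → Bool) into the subtype.
  set F : ((Set.Icc (0:ℝ) 1) → Bool) → {φ : (ℕ → ℝ) → ℝ // TwoLimitLike (Set.Icc 0 1) φ} :=
    fun g => ⟨phiw (fun t => if h : t ∈ Set.Icc (0:ℝ) 1 then (if g ⟨t, h⟩ then 1 else 0) else 0),
      h2ll _ (by intro t ht; simp only [dif_pos ht]; split_ifs <;> simp)⟩ with hF
  have hFinj : Function.Injective F := by
    intro g g' hgg'
    funext t
    have hw : ∀ s ∈ Set.Icc (0:ℝ) 1,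
        (fun u => if h : u ∈ Set.Icc (0:ℝ) 1 then (if g ⟨u, h⟩ then (1:ℝ) else 0) else 0) s
        ∈ Set.Icc (0:ℝ) 1 := by
      intro s hs; simp only [dif_pos hs]; split_ifs <;> simp
    have hw' : ∀ s ∈ Set.Icc (0:ℝ) 1,
        (fun u => if h : u ∈ Set.Icc (0:ℝ) 1 then (if g' ⟨u, h⟩ then (1:ℝ) else 0) else 0) s
        ∈ Set.Icc (0:ℝ) 1 := by
      intro s hs; simp only [dif_pos hs]; split_ifs <;> simp
    have := hinj _ _ hw hw' (fun a _ => by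
      have : (F g).1 = (F g').1 := congrArg Subtype.val hgg'
      exact congrFun this a) t.1 t.2
    simp only [dif_pos t.2] at this
    rcases t with ⟨t, ht⟩
    by_cases hg : g ⟨t, ht⟩ <;> by_cases hg' : g' ⟨t, ht⟩ <;>
      simp [hg, hg'] at this ⊢
  calc 2 ^ Cardinal.continuum = Cardinal.mk ((Set.Icc (0:ℝ) 1) → Bool) := by
        rw [← Cardinal.power_def, Cardinal.mk_bool, Cardinal.mk_Icc_real (by norm_num : (0:ℝ) < 1)]
    _ ≤ _ := Cardinal.mk_le_of_injective hFinj
end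

section
/- Let M, N : I² → I be means with M ≤ N pointwise satisfying |M(x,y) − N(x,y)| < |x − y| whenever x ≠ y. Define transfinite sequences x₀=x, y₀=y, x_{α+1}=M(x_α,y_α), y_{α+1}=N(x_α,y_α), and x_α = lim_{β↗α} x_β, y_α = lim_{β↗α} y_β at limit ordinals α. Then x_{ω₁} = y_{ω₁}, where ω₁ is the first uncountable ordinal. -/
open Ordinal

/-- The transfinite orbit of `(x,y)` under `(M,N)`: `x₀ = x`, `y₀ = y`,
`x_{α+1} = M(x_α, y_α)`, `y_{α+1} = N(x_α, y_α)`, and at limit ordinals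
`x_α = lim_{β↗α} x_β = sup_{1 ≤ β < α} x_β`, `y_α = lim_{β↗α} y_β = inf_{1 ≤ β < α} y_β`
(for `M ≤ N` the sequences are monotone from index `1` on, so these limits are the
suprema/infima of the tails). -/
noncomputable def tOrbit (M N : ℝ → ℝ → ℝ) (x y : ℝ) (o : Ordinal.{0}) : ℝ × ℝ :=
  Ordinal.limitRecOn o (x, y)
    (fun _ p => (M p.1 p.2, N p.1 p.2))
    (fun α _ ih =>
      (sSup {t : ℝ | ∃ β : Ordinal, ∃ h : β < α, 1 ≤ β ∧ (ih β h).1 = t},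
       sInf {t : ℝ | ∃ β : Ordinal, ∃ h : β < α, 1 ≤ β ∧ (ih β h).2 = t}))

/-!
From index `1` on, the intervals `[x_α, y_α]` are nonempty and nested: at a limit the supremum
of the `x_β` is at most the infimum of the `y_β` since of any two earlier intervals one
contains the other. Hence once `x_α = y_α` the orbit is constant. If `x_{ω₁} ≠ y_{ω₁}`, the
gaps `y_α - x_α`, `1 ≤ α < ω₁`, are therefore positive, and the contraction hypothesis makes
them strictly decreasing; the open intervals `(y_{α+1} - x_{α+1}, y_α - x_α)` are then uncountably many
pairwise disjoint nonempty open subsets of `ℝ`, which is impossible.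
-/

open Ordinal Order Set

lemma StrictAntiOn.countable_of_succ_mem {α β : Type*} [LinearOrder α] [SuccOrder α]
    [NoMaxOrder α] [LinearOrder β] [TopologicalSpace β] [OrderTopology β] [DenselyOrdered β]
    [TopologicalSpace.SeparableSpace β] {s : Set α} {g : α → β} (hg : StrictAntiOn g s)
    (hs : ∀ a ∈ s, succ a ∈ s) : s.Countable := by
  have hstep : ∀ a ∈ s, g (succ a) < g a := fun a ha => hg ha (hs a ha) (lt_succ a)
  refine PairwiseDisjoint.countable_of_isOpen (s := fun a => Ioo (g (succ a)) (g a))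
    (fun a ha b hb hab => ?_) (fun _ _ => isOpen_Ioo) (fun a ha => nonempty_Ioo.2 (hstep a ha))
  wlog hlt : a < b generalizing a b
  · exact (this b hb a ha hab.symm (hab.lt_or_gt.resolve_left hlt)).symm
  have hgb : g b ≤ g (succ a) := (succ_le_of_lt hlt).eq_or_lt.elim
    (fun h => h ▸ le_rfl) (fun h => (hg (hs a ha) hb h).le)
  exact disjoint_left.2 fun t hta htb => (htb.2.trans_le hgb).not_gt hta.1

lemma not_countable_Ico_one_omega_one : ¬ (Ico (1 : Ordinal.{0}) ω₁).Countable := by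
  intro h
  have hIio : (Iio (ω₁ : Ordinal.{0})).Countable := (h.insert 0).mono fun α hα =>
    (eq_or_ne α 0).imp id fun h0 => ⟨one_le_iff_ne_zero.2 h0, hα⟩
  rw [← Cardinal.le_aleph0_iff_set_countable, Cardinal.mk_Iio_ordinal, card_omega,
    ← Cardinal.lift_aleph0.{1, 0}, Cardinal.lift_le] at hIio
  exact Cardinal.aleph0_lt_aleph_one.not_ge hIio

lemma IsMean.mem_Icc {I : Set ℝ} {M : ℝ → ℝ → ℝ} {a b : ℝ} (hM : IsMean I M) (ha : a ∈ I)
    (hb : b ∈ I) (hab : a ≤ b) : M a b ∈ Icc a b := by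
  obtain ⟨-, hmin, hmax⟩ := hM a ha b hb
  rw [min_eq_left hab] at hmin
  rw [max_eq_right hab] at hmax
  exact ⟨hmin, hmax⟩

def NestedUpTo (M N : ℝ → ℝ → ℝ) (x y : ℝ) (α : Ordinal) : Prop :=
  (tOrbit M N x y α).1 ≤ (tOrbit M N x y α).2 ∧ ∀ β ∈ Icc 1 α,
    (tOrbit M N x y β).1 ≤ (tOrbit M N x y α).1 ∧ (tOrbit M N x y α).2 ≤ (tOrbit M N x y β).2

section Orbit

variable {M N : ℝ → ℝ → ℝ} {x y : ℝ}

local notation "𝐱" α:max => Prod.fst (tOrbit M N x y α)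
local notation "𝐲" α:max => Prod.snd (tOrbit M N x y α)

lemma tOrbit_zero : tOrbit M N x y 0 = (x, y) :=
  limitRecOn_zero ..

lemma tOrbit_add_one (α : Ordinal) : tOrbit M N x y (α + 1) = (M (𝐱 α) (𝐲 α), N (𝐱 α) (𝐲 α)) :=
  limitRecOn_add_one ..

lemma tOrbit_one : tOrbit M N x y 1 = (M x y, N x y) := by
  rw [← zero_add 1, tOrbit_add_one, tOrbit_zero]

lemma tOrbit_of_isSuccLimit {α : Ordinal} (hα : IsSuccLimit α) :
    tOrbit M N x y α =
      (sSup ((fun β => 𝐱 β) '' Ico 1 α), sInf ((fun β => 𝐲 β) '' Ico 1 α)) := by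
  refine (limitRecOn_limit _ _ _ _ hα).trans ?_
  congr 2 <;> ext t <;>
    exact ⟨fun ⟨β, hβ, h1, e⟩ => ⟨β, ⟨h1, hβ⟩, e⟩, fun ⟨β, ⟨h1, hβ⟩, e⟩ => ⟨β, hβ, h1, e⟩⟩

variable {I : Set ℝ}

lemma Icc_tOrbit_one_subset (hI : I.OrdConnected) (hM : IsMean I M) (hN : IsMean I N)
    (hx : x ∈ I) (hy : y ∈ I) : Icc (𝐱 1) (𝐲 1) ⊆ I := by
  rw [tOrbit_one]
  exact hI.out (hM x hx y hy).1 (hN x hx y hy).1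

lemma NestedUpTo.mem (hsub : Icc (𝐱 1) (𝐲 1) ⊆ I) {α : Ordinal} (hα : 1 ≤ α)
    (h : NestedUpTo M N x y α) : 𝐱 α ∈ I ∧ 𝐲 α ∈ I := by
  obtain ⟨hx1, hy1⟩ := h.2 1 ⟨le_rfl, hα⟩
  exact ⟨hsub ⟨hx1, h.1.trans hy1⟩, hsub ⟨hx1.trans h.1, hy1⟩⟩

lemma nestedUpTo_one (hMN : ∀ a ∈ I, ∀ b ∈ I, M a b ≤ N a b) (hx : x ∈ I) (hy : y ∈ I) :
    NestedUpTo M N x y 1 := by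
  refine ⟨?_, fun β hβ => ?_⟩
  · rw [tOrbit_one]
    exact hMN x hx y hy
  · rw [le_antisymm hβ.2 hβ.1]
    exact ⟨le_rfl, le_rfl⟩

lemma NestedUpTo.add_one (hsub : Icc (𝐱 1) (𝐲 1) ⊆ I) (hM : IsMean I M) (hN : IsMean I N)
    (hMN : ∀ a ∈ I, ∀ b ∈ I, M a b ≤ N a b) {α : Ordinal} (hα : 1 ≤ α)
    (h : NestedUpTo M N x y α) : NestedUpTo M N x y (α + 1) := by
  obtain ⟨hxI, hyI⟩ := h.mem hsub hα
  have hxM := hM.mem_Icc hxI hyI h.1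
  have hNy := hN.mem_Icc hxI hyI h.1
  have hstep : 𝐱 α ≤ 𝐱 (α + 1) ∧ 𝐲 (α + 1) ≤ 𝐲 α := by
    rw [tOrbit_add_one]
    exact ⟨hxM.1, hNy.2⟩
  refine ⟨by rw [tOrbit_add_one]; exact hMN _ hxI _ hyI, fun β hβ => ?_⟩
  rcases hβ.2.eq_or_lt with rfl | hlt
  · exact ⟨le_rfl, le_rfl⟩
  · obtain ⟨hxβ, hyβ⟩ := h.2 β ⟨hβ.1, lt_add_one_iff.1 hlt⟩
    exact ⟨hxβ.trans hstep.1, hstep.2.trans hyβ⟩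

lemma nestedUpTo_of_isSuccLimit {α : Ordinal} (hα : IsSuccLimit α)
    (ih : ∀ γ ∈ Ico 1 α, NestedUpTo M N x y γ) : NestedUpTo M N x y α := by
  have hcross : ∀ β ∈ Ico 1 α, ∀ γ ∈ Ico 1 α, 𝐱 β ≤ 𝐲 γ := by
    intro β hβ γ hγ
    have hδ : max β γ ∈ Ico 1 α := ⟨hβ.1.trans (le_max_left β γ), max_lt hβ.2 hγ.2⟩
    obtain ⟨hxy, hmono⟩ := ih _ hδ
    exact (hmono β ⟨hβ.1, le_max_left β γ⟩).1.trans
      (hxy.trans (hmono γ ⟨hγ.1, le_max_right β γ⟩).2)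
  have h1 : (1 : Ordinal) ∈ Ico 1 α := ⟨le_rfl, one_lt_of_isSuccLimit hα⟩
  have hX : ((fun β => 𝐱 β) '' Ico 1 α).Nonempty := ⟨_, mem_image_of_mem _ h1⟩
  have hY : ((fun β => 𝐲 β) '' Ico 1 α).Nonempty := ⟨_, mem_image_of_mem _ h1⟩
  have hXbdd : BddAbove ((fun β => 𝐱 β) '' Ico 1 α) :=
    ⟨𝐲 1, forall_mem_image.2 fun β hβ => hcross β hβ 1 h1⟩
  have hYbdd : BddBelow ((fun β => 𝐲 β) '' Ico 1 α) :=
    ⟨𝐱 1, forall_mem_image.2 fun γ hγ => hcross 1 h1 γ hγ⟩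
  rw [NestedUpTo, tOrbit_of_isSuccLimit hα]
  refine ⟨csSup_le hX (forall_mem_image.2 fun β hβ =>
    le_csInf hY (forall_mem_image.2 fun γ hγ => hcross β hβ γ hγ)), fun β hβ => ?_⟩
  rcases hβ.2.eq_or_lt with rfl | hlt
  · rw [tOrbit_of_isSuccLimit hα]
    exact ⟨le_rfl, le_rfl⟩
  · exact ⟨le_csSup hXbdd (mem_image_of_mem _ ⟨hβ.1, hlt⟩),
      csInf_le hYbdd (mem_image_of_mem _ ⟨hβ.1, hlt⟩)⟩

lemma nestedUpTo_of_one_le (hI : I.OrdConnected) (hM : IsMean I M) (hN : IsMean I N)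
    (hMN : ∀ a ∈ I, ∀ b ∈ I, M a b ≤ N a b) (hx : x ∈ I) (hy : y ∈ I) {α : Ordinal}
    (hα : 1 ≤ α) : NestedUpTo M N x y α := by
  induction α using limitRecOn with
  | zero => exact absurd hα (not_le.2 zero_lt_one)
  | add_one γ ih =>
    rcases eq_or_ne γ 0 with rfl | hγ
    · rw [zero_add]
      exact nestedUpTo_one hMN hx hy
    · have hγ1 := one_le_iff_ne_zero.2 hγ
      exact (ih hγ1).add_one (Icc_tOrbit_one_subset hI hM hN hx hy) hM hN hMN hγ1
  | limit α hlim ih => exact nestedUpTo_of_isSuccLimit hlim fun γ hγ => ih γ hγ.2 hγ.1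

lemma NestedUpTo.fst_eq_snd_of_le {α β : Ordinal} (h : NestedUpTo M N x y β) (hα : 1 ≤ α)
    (hαβ : α ≤ β) (hαeq : 𝐱 α = 𝐲 α) : 𝐱 β = 𝐲 β := by
  obtain ⟨hx, hy⟩ := h.2 α ⟨hα, hαβ⟩
  exact le_antisymm h.1 (hy.trans (hαeq ▸ hx))

lemma NestedUpTo.gap_add_one_lt (hsub : Icc (𝐱 1) (𝐲 1) ⊆ I)
    (hMN : ∀ a ∈ I, ∀ b ∈ I, M a b ≤ N a b)
    (hcontr : ∀ a ∈ I, ∀ b ∈ I, a ≠ b → |M a b - N a b| < |a - b|) {α : Ordinal} (hα : 1 ≤ α)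
    (h : NestedUpTo M N x y α) (hne : 𝐱 α ≠ 𝐲 α) :
    𝐲 (α + 1) - 𝐱 (α + 1) < 𝐲 α - 𝐱 α := by
  obtain ⟨hxI, hyI⟩ := h.mem hsub hα
  have hlt := hcontr _ hxI _ hyI hne
  rw [abs_sub_comm, abs_of_nonneg (sub_nonneg.2 (hMN _ hxI _ hyI)), abs_sub_comm,
    abs_of_nonneg (sub_nonneg.2 h.1)] at hlt
  rwa [tOrbit_add_one]

lemma tOrbit_gap_strictAntiOn (hsub : Icc (𝐱 1) (𝐲 1) ⊆ I)
    (hMN : ∀ a ∈ I, ∀ b ∈ I, M a b ≤ N a b)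
    (hcontr : ∀ a ∈ I, ∀ b ∈ I, a ≠ b → |M a b - N a b| < |a - b|)
    (hnest : ∀ α, 1 ≤ α → NestedUpTo M N x y α) {s : Set Ordinal} (hs : s ⊆ Ici 1)
    (hne : ∀ α ∈ s, 𝐱 α ≠ 𝐲 α) : StrictAntiOn (fun α => 𝐲 α - 𝐱 α) s := by
  intro α hα β hβ hαβ
  obtain ⟨hx, hy⟩ :=
    (hnest β (hs hβ)).2 (α + 1) ⟨(hs hα).trans le_self_add, add_one_le_of_lt hαβ⟩
  calc 𝐲 β - 𝐱 β ≤ 𝐲 (α + 1) - 𝐱 (α + 1) := sub_le_sub hy hx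
    _ < 𝐲 α - 𝐱 α := (hnest α (hs hα)).gap_add_one_lt hsub hMN hcontr (hs hα) (hne α hα)

end Orbit

/-- for comparable means `M ≤ N` with `|M(x,y) − N(x,y)| < |x − y|`
for `x ≠ y`, the transfinite orbit satisfies `x_{ω₁} = y_{ω₁}`. -/
theorem stmt11 (I : Set ℝ) (hI : I.OrdConnected) (M N : ℝ → ℝ → ℝ)
    (hM : IsMean I M) (hN : IsMean I N)
    (hMN : ∀ x ∈ I, ∀ y ∈ I, M x y ≤ N x y)
    (hcontr : ∀ x ∈ I, ∀ y ∈ I, x ≠ y → |M x y - N x y| < |x - y|)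
    (x : ℝ) (hx : x ∈ I) (y : ℝ) (hy : y ∈ I) :
    (tOrbit M N x y ω₁).1 = (tOrbit M N x y ω₁).2 := by
  have hnest : ∀ α, 1 ≤ α → NestedUpTo M N x y α := fun α =>
    nestedUpTo_of_one_le hI hM hN hMN hx hy
  by_contra hne
  have hgap : ∀ α ∈ Ico 1 ω₁, (tOrbit M N x y α).1 ≠ (tOrbit M N x y α).2 := fun α hα heq =>
    hne ((hnest ω₁ (hα.1.trans hα.2.le)).fst_eq_snd_of_le hα.1 hα.2.le heq)
  have hanti := tOrbit_gap_strictAntiOn (Icc_tOrbit_one_subset hI hM hN hx hy) hMN hcontr hnest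
    (fun _ hα => hα.1) hgap
  exact not_countable_Ico_one_omega_one <| hanti.countable_of_succ_mem fun α hα =>
    ⟨hα.1.trans (le_succ α), (Cardinal.isSuccLimit_omega 1).succ_lt hα.2⟩
end

section
/- Fix an interval I of length greater than 1 and define M(x,y) = (x+y)/2 if |x−y| ≤ 1, M(x,y) = (x+y−√|x−y|)/2 if |x−y| > 1, and N(x,y) = (x+y)/2 if |x−y| ≤ 1, N(x,y) = (x+y+√|x−y|)/2 if |x−y| > 1. Then M and N are symmetric strict means on I (strictly between min and max whenever x ≠ y), satisfying |M(x,y)−N(x,y)| < |x−y| for x ≠ y, and the arithmetic mean A(x,y) = (x+y)/2 is (M,N)-invariant. -/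
/-- The mean `M` of the example. -/
noncomputable def Mex (x y : ℝ) : ℝ :=
  if |x - y| ≤ 1 then (x + y) / 2 else (x + y - Real.sqrt |x - y|) / 2

/-- The mean `N` of the example. -/
noncomputable def Nex (x y : ℝ) : ℝ :=
  if |x - y| ≤ 1 then (x + y) / 2 else (x + y + Real.sqrt |x - y|) / 2

lemma MexNex_bounds (x y : ℝ) (h : x ≠ y) :
    min x y < Mex x y ∧ Mex x y < max x y ∧
    min x y < Nex x y ∧ Nex x y < max x y := by
  unfold Mex Nex
  have hd : 0 < |x - y| := abs_pos.mpr (sub_ne_zero.mpr h)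
  have hmin : 2 * min x y = x + y - |x - y| := by
    rcases le_total x y with hle | hle <;>
      simp [min_eq_left, min_eq_right, hle, abs_of_nonpos, abs_of_nonneg, sub_nonneg,
        sub_nonpos] <;> ring
  have hmax : 2 * max x y = x + y + |x - y| := by
    rcases le_total x y with hle | hle <;>
      simp [max_eq_left, max_eq_right, hle, abs_of_nonpos, abs_of_nonneg, sub_nonneg,
        sub_nonpos] <;> ring
  by_cases hc : |x - y| ≤ 1
  · simp only [hc, if_pos]
    refine ⟨by nlinarith, by nlinarith, by nlinarith, by nlinarith⟩
  · push_neg at hc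
    have hs : Real.sqrt |x - y| < |x - y| := (Real.sqrt_lt' hd).mpr (by nlinarith)
    have hs0 : 0 < Real.sqrt |x - y| := Real.sqrt_pos.mpr hd
    simp only [hc.not_ge, if_neg, if_false]
    refine ⟨by nlinarith, by nlinarith, by nlinarith, by nlinarith⟩

lemma MexNex_weak (x y : ℝ) :
    min x y ≤ Mex x y ∧ Mex x y ≤ max x y ∧
    min x y ≤ Nex x y ∧ Nex x y ≤ max x y := by
  by_cases h : x = y
  · subst h
    simp [Mex, Nex]
  · obtain ⟨h1, h2, h3, h4⟩ := MexNex_bounds x y h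
    exact ⟨h1.le, h2.le, h3.le, h4.le⟩

/-- on an interval `I` of length `> 1`, `Mex` and `Nex` are symmetric
strict means satisfying `|M − N| < |x − y|` for `x ≠ y`, and the arithmetic mean
is `(Mex, Nex)`-invariant. -/
theorem stmt14 (I : Set ℝ) (hI : I.OrdConnected)
    (hlen : ∃ a ∈ I, ∃ b ∈ I, 1 < b - a) :
    IsMean I Mex ∧ IsMean I Nex ∧
    (∀ x ∈ I, ∀ y ∈ I, Mex x y = Mex y x ∧ Nex x y = Nex y x) ∧
    (∀ x ∈ I, ∀ y ∈ I, x ≠ y →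
      min x y < Mex x y ∧ Mex x y < max x y ∧
      min x y < Nex x y ∧ Nex x y < max x y) ∧
    (∀ x ∈ I, ∀ y ∈ I, x ≠ y → |Mex x y - Nex x y| < |x - y|) ∧
    IsInvariantMean I Mex Nex (fun x y => (x + y) / 2) := by
  have hmem : ∀ x ∈ I, ∀ y ∈ I, min x y ∈ I ∧ max x y ∈ I := by
    intro x hx y hy
    rcases le_total x y with h | h
    · simp [min_eq_left h, max_eq_right h, hx, hy]
    · simp [min_eq_right h, max_eq_left h, hx, hy]
  have hIcc : ∀ x ∈ I, ∀ y ∈ I, Set.Icc (min x y) (max x y) ⊆ I := by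
    intro x hx y hy
    obtain ⟨h1, h2⟩ := hmem x hx y hy
    exact hI.out h1 h2
  refine ⟨?_, ?_, ?_, ?_, ?_, ?_⟩
  · intro x hx y hy
    obtain ⟨h1, h2, _, _⟩ := MexNex_weak x y
    exact ⟨hIcc x hx y hy ⟨h1, h2⟩, h1, h2⟩
  · intro x hx y hy
    obtain ⟨_, _, h3, h4⟩ := MexNex_weak x y
    exact ⟨hIcc x hx y hy ⟨h3, h4⟩, h3, h4⟩
  · intro x _ y _
    constructor <;> simp [Mex, Nex, abs_sub_comm x y, add_comm x y]
  · intro x _ y _ h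
    exact MexNex_bounds x y h
  · intro x _ y _ h
    have hd : 0 < |x - y| := abs_pos.mpr (sub_ne_zero.mpr h)
    unfold Mex Nex
    by_cases hc : |x - y| ≤ 1
    · simp only [hc, if_pos]
      simpa using hd
    · push_neg at hc
      have hs : Real.sqrt |x - y| < |x - y| := (Real.sqrt_lt' hd).mpr (by nlinarith)
      have hs0 : 0 ≤ Real.sqrt |x - y| := Real.sqrt_nonneg _
      simp only [hc.not_ge, if_neg, if_false]
      rw [show (x + y - Real.sqrt |x - y|) / 2 - (x + y + Real.sqrt |x - y|) / 2
        = -(Real.sqrt |x - y|) by ring, abs_neg, abs_of_nonneg hs0]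
      exact hs
  · intro x _ y _
    simp only
    have : Mex x y + Nex x y = x + y := by
      unfold Mex Nex
      by_cases hc : |x - y| ≤ 1 <;> simp [hc] <;> ring
    rw [this]
end

section
/- For M, N as defined (M(x,y)=(x+y)/2, resp. (x+y−√|x−y|)/2 according as |x−y| ≤ 1 or > 1; N analogously with +√|x−y|), the orbit sequences x₀=x, y₀=y, x_{n+1}=M(xₙ,yₙ), y_{n+1}=N(xₙ,yₙ) satisfy xₙ + yₙ = x + y for all n ≥ 0, and lim_{n→∞}(yₙ − xₙ) equals 0 if |x−y| ≤ 1 and equals 1 if |x−y| > 1 (where x ≤ y). Consequently Lo(x,y) = (x+y)/2 if |x−y| ≤ 1 and (x+y−1)/2 otherwise, and Up(x,y) = (x+y)/2 if |x−y| ≤ 1 and (x+y+1)/2 otherwise. -/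
/-!
The sum `xₙ + yₙ` is invariant and the gap `yₙ - xₙ` evolves by the map `d ↦ √|d|` when
`|d| > 1`, `d ↦ 0` when `|d| ≤ 1`. Hence the gap is `0` from the first step on when
`|x - y| ≤ 1`, while otherwise `yₙ₊₁ - xₙ₊₁ = √|x - y| ^ (1/2)ⁿ → 1`. Since
`min a b = (a + b - |b - a|) / 2` and `max a b = (a + b + |b - a|) / 2`, the limits of the
minima and maxima follow.
-/

open Filter Topology

section Orbit

variable {M N : ℝ → ℝ → ℝ} {x y : ℝ}

theorem orbit_fst_add_snd (hMN : ∀ a b, M a b + N a b = a + b) (n : ℕ) :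
    (orbit M N x y n).1 + (orbit M N x y n).2 = x + y := by
  induction n with
  | zero => rfl
  | succ n ih => exact (hMN _ _).trans ih

theorem orbit_snd_sub_fst {f : ℝ → ℝ} (hMN : ∀ a b, N a b - M a b = f (b - a)) (n : ℕ) :
    (orbit M N x y n).2 - (orbit M N x y n).1 = f^[n] (y - x) := by
  induction n with
  | zero => rfl
  | succ n ih => rw [Function.iterate_succ_apply', ← ih]; exact hMN _ _

theorem min_orbit_eq (hsum : ∀ n, (orbit M N x y n).1 + (orbit M N x y n).2 = x + y)
    (n : ℕ) : min (orbit M N x y n).1 (orbit M N x y n).2 =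
      (x + y - |(orbit M N x y n).2 - (orbit M N x y n).1|) / 2 := by
  have := min_add_max (orbit M N x y n).1 (orbit M N x y n).2
  have := max_sub_min_eq_abs (orbit M N x y n).1 (orbit M N x y n).2
  linarith [hsum n]

theorem max_orbit_eq (hsum : ∀ n, (orbit M N x y n).1 + (orbit M N x y n).2 = x + y)
    (n : ℕ) : max (orbit M N x y n).1 (orbit M N x y n).2 =
      (x + y + |(orbit M N x y n).2 - (orbit M N x y n).1|) / 2 := by
  have := min_add_max (orbit M N x y n).1 (orbit M N x y n).2
  have := max_sub_min_eq_abs (orbit M N x y n).1 (orbit M N x y n).2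
  linarith [hsum n]

theorem Lo_eq_of_tendsto (hsum : ∀ n, (orbit M N x y n).1 + (orbit M N x y n).2 = x + y)
    {L : ℝ} (hgap : Tendsto (fun n => (orbit M N x y n).2 - (orbit M N x y n).1) atTop (𝓝 L)) :
    Lo M N x y = (x + y - |L|) / 2 := by
  have hmin : Tendsto (fun n => min (orbit M N x y n).1 (orbit M N x y n).2) atTop
      (𝓝 ((x + y - |L|) / 2)) := by
    simp_rw [min_orbit_eq hsum]
    exact (tendsto_const_nhds.sub hgap.abs).div_const 2
  exact hmin.liminf_eq

theorem Up_eq_of_tendsto (hsum : ∀ n, (orbit M N x y n).1 + (orbit M N x y n).2 = x + y)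
    {L : ℝ} (hgap : Tendsto (fun n => (orbit M N x y n).2 - (orbit M N x y n).1) atTop (𝓝 L)) :
    Up M N x y = (x + y + |L|) / 2 := by
  have hmax : Tendsto (fun n => max (orbit M N x y n).1 (orbit M N x y n).2) atTop
      (𝓝 ((x + y + |L|) / 2)) := by
    simp_rw [max_orbit_eq hsum]
    exact (tendsto_const_nhds.add hgap.abs).div_const 2
  exact hmax.limsup_eq

end Orbit

noncomputable def gapMap (d : ℝ) : ℝ :=
  if |d| ≤ 1 then 0 else Real.sqrt |d|

theorem Mex_add_Nex (a b : ℝ) : Mex a b + Nex a b = a + b := by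
  unfold Mex Nex; split <;> ring

theorem Nex_sub_Mex (a b : ℝ) : Nex a b - Mex a b = gapMap (b - a) := by
  unfold Mex Nex gapMap; rw [abs_sub_comm]; split <;> ring

theorem gapMap_iterate_succ_of_abs_le_one {d : ℝ} (hd : |d| ≤ 1) (n : ℕ) :
    gapMap^[n + 1] d = 0 := by
  have hfix : gapMap 0 = 0 := by simp [gapMap]
  rw [Function.iterate_succ_apply, gapMap, if_pos hd, Function.iterate_fixed hfix]

theorem tendsto_gapMap_iterate_of_abs_le_one {d : ℝ} (hd : |d| ≤ 1) :
    Tendsto (fun n => gapMap^[n] d) atTop (𝓝 0) := by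
  rw [← tendsto_add_atTop_iff_nat 1]
  simp_rw [gapMap_iterate_succ_of_abs_le_one hd]
  exact tendsto_const_nhds

theorem gapMap_iterate_of_one_lt {d : ℝ} (hd : 1 < d) (n : ℕ) :
    gapMap^[n] d = d ^ ((1 / 2 : ℝ) ^ n) := by
  induction n with
  | zero => simp
  | succ n ih =>
    have hd0 : 0 < d := by linarith
    have hgt : 1 < d ^ ((1 / 2 : ℝ) ^ n) := Real.one_lt_rpow hd (by positivity)
    rw [Function.iterate_succ_apply', ih, gapMap, abs_of_pos (by linarith), if_neg hgt.not_ge,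
      Real.sqrt_eq_rpow, ← Real.rpow_mul hd0.le, pow_succ]

theorem tendsto_rpow_half_pow {d : ℝ} (hd : 0 < d) :
    Tendsto (fun n : ℕ => d ^ ((1 / 2 : ℝ) ^ n)) atTop (𝓝 1) := by
  have hexp : Tendsto (fun n : ℕ => (1 / 2 : ℝ) ^ n) atTop (𝓝 0) :=
    tendsto_pow_atTop_nhds_zero_of_lt_one (by norm_num) (by norm_num)
  simpa using tendsto_const_nhds.rpow hexp (Or.inl hd.ne')

theorem tendsto_gapMap_iterate_of_one_lt_abs {d : ℝ} (hd : 1 < |d|) :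
    Tendsto (fun n => gapMap^[n] d) atTop (𝓝 1) := by
  have hstep : 1 < gapMap d := by
    rw [gapMap, if_neg hd.not_ge]
    exact Real.lt_sqrt_of_sq_lt (by nlinarith)
  rw [← tendsto_add_atTop_iff_nat 1]
  simp_rw [Function.iterate_succ_apply, gapMap_iterate_of_one_lt hstep]
  exact tendsto_rpow_half_pow (by linarith)

theorem stmt15_general (x y : ℝ) :
    (∀ n, (orbit Mex Nex x y n).1 + (orbit Mex Nex x y n).2 = x + y) ∧
    (|x - y| ≤ 1 →
      Filter.Tendsto (fun n => (orbit Mex Nex x y n).2 - (orbit Mex Nex x y n).1)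
        Filter.atTop (nhds 0) ∧
      Lo Mex Nex x y = (x + y) / 2 ∧ Up Mex Nex x y = (x + y) / 2) ∧
    (1 < |x - y| →
      Filter.Tendsto (fun n => (orbit Mex Nex x y n).2 - (orbit Mex Nex x y n).1)
        Filter.atTop (nhds 1) ∧
      Lo Mex Nex x y = (x + y - 1) / 2 ∧ Up Mex Nex x y = (x + y + 1) / 2) := by
  have hsum := orbit_fst_add_snd (x := x) (y := y) Mex_add_Nex
  have hgap := orbit_snd_sub_fst (x := x) (y := y) Nex_sub_Mex
  refine ⟨hsum, fun h => ?_, fun h => ?_⟩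
  · have hlim : Tendsto (fun n => (orbit Mex Nex x y n).2 - (orbit Mex Nex x y n).1) atTop
        (𝓝 0) := by
      simpa only [hgap] using tendsto_gapMap_iterate_of_abs_le_one (by rwa [abs_sub_comm])
    exact ⟨hlim, by simpa using Lo_eq_of_tendsto hsum hlim,
      by simpa using Up_eq_of_tendsto hsum hlim⟩
  · have hlim : Tendsto (fun n => (orbit Mex Nex x y n).2 - (orbit Mex Nex x y n).1) atTop
        (𝓝 1) := by
      simpa only [hgap] using tendsto_gapMap_iterate_of_one_lt_abs (by rwa [abs_sub_comm])
    exact ⟨hlim, by simpa using Lo_eq_of_tendsto hsum hlim,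
      by simpa using Up_eq_of_tendsto hsum hlim⟩

/-- for the example pair `(Mex, Nex)` and `x ≤ y`, the orbit preserves
the sum `xₙ + yₙ = x + y`, the gap `yₙ − xₙ` tends to `0` when `|x−y| ≤ 1` and to `1`
when `|x−y| > 1`, and consequently `Lo` and `Up` are given by the explicit formulas. -/
theorem stmt15 (x y : ℝ) (hxy : x ≤ y) :
    (∀ n, (orbit Mex Nex x y n).1 + (orbit Mex Nex x y n).2 = x + y) ∧
    (|x - y| ≤ 1 →
      Filter.Tendsto (fun n => (orbit Mex Nex x y n).2 - (orbit Mex Nex x y n).1)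
        Filter.atTop (nhds 0) ∧
      Lo Mex Nex x y = (x + y) / 2 ∧ Up Mex Nex x y = (x + y) / 2) ∧
    (1 < |x - y| →
      Filter.Tendsto (fun n => (orbit Mex Nex x y n).2 - (orbit Mex Nex x y n).1)
        Filter.atTop (nhds 1) ∧
      Lo Mex Nex x y = (x + y - 1) / 2 ∧ Up Mex Nex x y = (x + y + 1) / 2) :=
  stmt15_general x y
end
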